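/- Let T be a finite 2-group and H a finite group of odd order such that d(T × H) = 2 and the Frattini subgroup Φ(T) is nontrivial. Then the nim-number of the achievement game GEN(T × H) is *0. -/

import Mathlib

/-! The second player wins by a pairing strategy. Since `T` and `H` have coprime orders, every
subgroup of `T × H` is a product of subgroups of the factors, whence `Φ(T) × 1 ≤ Φ(T × H)`; the
nontrivial `2`-group `Φ(T)` contains an involution `t`. Unless a move wins at once, the second
player answers `g` by `t * g`. The chosen set then stays closed under left multiplication by `t`,
and as `t` is a non-generator, adding `t * g` creates no one-move win that adding `g` did not
already offer. Since `d(T × H) = 2`, the first player cannot win with the opening move. -/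

universe u

namespace SetTheory

/-- Combinatorial pregames, as `SetTheory.PGame` in the older Mathlib (since removed). -/
inductive PGame : Type (u + 1)
  | mk : ∀ α β : Type u, (α → PGame) → (β → PGame) → PGame

namespace PGame

instance : Zero PGame := ⟨⟨PEmpty, PEmpty, PEmpty.elim, PEmpty.elim⟩⟩

end PGame

end SetTheory

/-- Nimbers, as in the older Mathlib (since removed): a type synonym for ordinals. -/
def Nimber : Type (u + 1) := Ordinal.{u}

namespace Nimber

noncomputable instance : LinearOrder Nimber := inferInstanceAs (LinearOrder Ordinal)

noncomputable instance : ConditionallyCompleteLinearOrderBot Nimber :=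
  inferInstanceAs (ConditionallyCompleteLinearOrderBot Ordinal)

end Nimber

/-- The identity map from ordinals to nimbers. -/
def Ordinal.toNimber : Ordinal ≃o Nimber := OrderIso.refl _

prefix:75 "∗" => Ordinal.toNimber

namespace SetTheory

namespace PGame

/-- The Grundy value of an impartial game (mex of the values of the left options). -/
noncomputable def grundyValue : PGame.{u} → Nimber.{u}
  | mk _ _ L _ => sInf (Set.range fun i => grundyValue (L i))ᶜ

end PGame

end SetTheory

open SetTheory Nimber
open scoped Classical

/-- The achievement game `GEN(G)` of Anderson and Harary: positions are (finite) subsets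
of the finite group `G`; a position that generates `G` is terminal, and otherwise the
options are obtained by selecting a previously-unselected element of `G`.  The game is
impartial, so the left and right options agree. -/
noncomputable def genGame {G : Type} [Group G] [Fintype G] (P : Finset G) : PGame :=
  if Subgroup.closure (P : Set G) = ⊤ then 0
  else
    PGame.mk {g : G // g ∉ P} {g : G // g ∉ P}
      (fun g => genGame (insert g.1 P)) (fun g => genGame (insert g.1 P))
termination_by Fintype.card G - P.card
decreasing_by
  all_goals
    have h1 : (insert g.1 P).card = P.card + 1 := Finset.card_insert_of_notMem g.2
    have h2 : (insert g.1 P).card ≤ Fintype.card G := Finset.card_le_univ _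
    omega

/-- The nim-number of the achievement game `GEN(G)`, i.e. the Sprague-Grundy value of the
starting position `∅`. -/
noncomputable def nimGEN (G : Type) [Group G] [Fintype G] : Nimber :=
  PGame.grundyValue (genGame (∅ : Finset G))

/-- `d(G)`: the minimal cardinality of a generating set of `G`. -/
noncomputable def minGen (G : Type) [Group G] : ℕ :=
  sInf {n : ℕ | ∃ S : Finset G, S.card = n ∧ Subgroup.closure (S : Set G) = ⊤}

namespace SetTheory.PGame

theorem grundyValue_mk_eq_bot_iff {α β : Type} [Finite α] (L : α → PGame.{0})
    (R : β → PGame.{0}) :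
    grundyValue (mk α β L R) = ⊥ ↔ ∀ i, grundyValue (L i) ≠ ⊥ := by
  rw [grundyValue]
  constructor
  · rintro hbot i hi
    have : Infinite Nimber.{0} := inferInstanceAs (Infinite Ordinal)
    have : WellFoundedLT Nimber.{0} := inferInstanceAs (WellFoundedLT Ordinal)
    have hmex := csInf_mem (Set.finite_range fun i => grundyValue (L i)).infinite_compl.nonempty
    rw [hbot] at hmex
    exact hmex ⟨i, hi⟩
  · intro h
    exact le_bot_iff.1 (csInf_le (OrderBot.bddBelow _) fun ⟨i, hi⟩ => h i hi)

theorem grundyValue_zero : grundyValue (0 : PGame.{0}) = ⊥ :=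
  (grundyValue_mk_eq_bot_iff (α := PEmpty) PEmpty.elim PEmpty.elim).2 PEmpty.rec

end SetTheory.PGame

open PGame

namespace Subgroup

theorem closure_eq_top_of_closure_insert_mul {G : Type*} [Group G]
    [IsCoatomic (Subgroup G)] {S : Set G} {t g : G} (ht : t ∈ frattini G) (hg : g ∈ S)
    (h : closure (insert (t * g) S) = ⊤) : closure S = ⊤ := by
  refine frattini_nongenerating (top_le_iff.1 (h ▸ (closure_le _).2 ?_))
  rintro x (rfl | hx)
  · exact mul_mem (mem_sup_right ht) (mem_sup_left (subset_closure hg))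
  · exact mem_sup_left (subset_closure hx)

variable {T H : Type*} [Group T] [Group H]

theorem mk_fst_one_mem_of_coprime (hcop : (Nat.card T).Coprime (Nat.card H))
    {K : Subgroup (T × H)} {p : T × H} (hp : p ∈ K) : (p.1, 1) ∈ K := by
  obtain ⟨m, hm⟩ := exists_pow_eq_self_of_coprime
    (hcop.symm.coprime_dvd_right (_root_.orderOf_dvd_natCard p.1))
  have hpow : (p ^ Nat.card H) ^ m = (p.1, 1) := by
    ext
    · simpa using hm
    · simp [pow_card_eq_one']
  exact hpow ▸ pow_mem (pow_mem hp _) _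

theorem eq_prod_map_fst_snd_of_coprime (hcop : (Nat.card T).Coprime (Nat.card H))
    (K : Subgroup (T × H)) :
    K = (K.map (MonoidHom.fst T H)).prod (K.map (MonoidHom.snd T H)) := by
  refine le_antisymm (fun p hp => ⟨⟨p, hp, rfl⟩, ⟨p, hp, rfl⟩⟩) ?_
  rintro ⟨-, -⟩ ⟨⟨a, ha, rfl⟩, ⟨b, hb, rfl⟩⟩
  have hsplit : (a.1, b.2) = (a.1, (1 : H)) * ((b.1, 1)⁻¹ * b) := by ext <;> simp
  change (a.1, b.2) ∈ K
  rw [hsplit]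
  exact mul_mem (mk_fst_one_mem_of_coprime hcop ha)
    (mul_mem (inv_mem (mk_fst_one_mem_of_coprime hcop hb)) hb)

end Subgroup

open Subgroup in
theorem mk_one_mem_frattini_prod_of_coprime {T H : Type*} [Group T] [Group H] [Finite T]
    (hcop : (Nat.card T).Coprime (Nat.card H))
    {t : T} (ht : t ∈ frattini T) : (t, (1 : H)) ∈ frattini (T × H) := by
  simp only [frattini, Order.radical, mem_iInf]
  intro M hM
  set A := M.map (MonoidHom.fst T H)
  set B := M.map (MonoidHom.snd T H)
  have hM_eq : M = A.prod B := eq_prod_map_fst_snd_of_coprime hcop M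
  have hle : M ≤ (A ⊔ frattini T).prod B := hM_eq ▸ prod_mono le_sup_left le_rfl
  rcases hM.le_iff.1 hle with htop | heq
  · have hA : A = ⊤ := frattini_nongenerating <|
      eq_top_iff.2 fun a _ => (mem_prod.1 (htop ▸ mem_top (a, (1 : H)))).1
    exact hM_eq ▸ mem_prod.2 ⟨hA ▸ mem_top t, one_mem B⟩
  · exact heq ▸ mem_prod.2 ⟨mem_sup_right ht, one_mem B⟩

theorem minGen_le_card {G : Type} [Group G] {S : Finset G}
    (h : Subgroup.closure (S : Set G) = ⊤) : minGen G ≤ S.card :=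
  Nat.sInf_le ⟨S, rfl, h⟩

section GenGame

variable {G : Type} [Group G] [Fintype G]

theorem grundyValue_genGame_of_closure_eq_top {P : Finset G}
    (h : Subgroup.closure (P : Set G) = ⊤) : grundyValue (genGame P) = ⊥ := by
  rw [genGame, if_pos h, grundyValue_zero]

theorem grundyValue_genGame_eq_bot_iff {P : Finset G} (h : Subgroup.closure (P : Set G) ≠ ⊤) :
    grundyValue (genGame P) = ⊥ ↔ ∀ g ∉ P, grundyValue (genGame (insert g P)) ≠ ⊥ := by
  rw [genGame, if_neg h, grundyValue_mk_eq_bot_iff, Subtype.forall]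

theorem grundyValue_genGame_eq_bot_of_mul_mem {t : G} (ht : t ∈ frattini G)
    (ht2 : orderOf t = 2) (P : Finset G) (hstable : ∀ x ∈ P, t * x ∈ P)
    (hnowin : ∀ x, Subgroup.closure (↑(insert x P) : Set G) ≠ ⊤) :
    grundyValue (genGame P) = ⊥ := by
  have hP : Subgroup.closure (P : Set G) ≠ ⊤ := fun h =>
    hnowin 1 (top_le_iff.1 (h ▸ Subgroup.closure_mono (by simp)))
  rw [grundyValue_genGame_eq_bot_iff hP]
  intro g hg hbot
  have hanswer := (grundyValue_genGame_eq_bot_iff (hnowin g)).1 hbot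
  by_cases hwin : ∃ x, Subgroup.closure (↑(insert x (insert g P)) : Set G) = ⊤
  · obtain ⟨x, hx⟩ := hwin
    have hxQ : x ∉ insert g P := fun hmem =>
      hnowin g (by rwa [Finset.insert_eq_self.2 hmem] at hx)
    exact hanswer x hxQ (grundyValue_genGame_of_closure_eq_top hx)
  push Not at hwin
  have htt : t * t = 1 := by rw [← pow_two, ← ht2, pow_orderOf_eq_one]
  have httg : t * (t * g) = g := by rw [← mul_assoc, htt, one_mul]
  have htgQ : t * g ∉ insert g P := by
    rw [Finset.mem_insert, not_or]
    refine ⟨fun h => ?_, fun h => hg (httg ▸ hstable _ h)⟩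
    have : orderOf t = 1 := orderOf_eq_one_iff.2 (mul_eq_right.1 h)
    omega
  refine hanswer (t * g) htgQ (grundyValue_genGame_eq_bot_of_mul_mem ht ht2 _ ?_ ?_)
  · intro x hx
    simp only [Finset.mem_insert] at hx ⊢
    rcases hx with rfl | rfl | hx
    · exact Or.inr (Or.inl httg)
    · exact Or.inl rfl
    · exact Or.inr (Or.inr (hstable x hx))
  · intro x hx
    refine hwin x (Subgroup.closure_eq_top_of_closure_insert_mul ht (g := g) (by simp) ?_)
    rwa [Finset.insert_comm, Finset.coe_insert] at hx
termination_by Fintype.card G - P.card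
decreasing_by
  have hcard := Finset.card_le_univ (insert (t * g) (insert g P))
  rw [Finset.card_insert_of_notMem htgQ, Finset.card_insert_of_notMem hg] at hcard ⊢
  omega

theorem nimGEN_eq_zero_of_orderOf_eq_two_of_mem_frattini {t : G} (ht : t ∈ frattini G)
    (ht2 : orderOf t = 2) (hd : 2 ≤ minGen G) : nimGEN G = ∗0 := by
  have hnowin (x : G) : Subgroup.closure (↑(insert x (∅ : Finset G)) : Set G) ≠ ⊤ := by
    intro h
    have := minGen_le_card h
    rw [Finset.card_insert_of_notMem (Finset.notMem_empty x), Finset.card_empty] at this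
    omega
  rw [nimGEN, grundyValue_genGame_eq_bot_of_mul_mem ht ht2 ∅ (by simp) hnowin]
  exact Ordinal.bot_eq_zero

end GenGame

theorem nimGEN_of_minGen_eq_two_frattini_nontrivial (T H : Type) [Group T] [Fintype T]
    [Group H] [Fintype H] (hT : ∃ n : ℕ, Fintype.card T = 2 ^ n)
    (hH : Odd (Fintype.card H)) (hd : minGen (T × H) = 2) (hfr : frattini T ≠ ⊥) :
    nimGEN (T × H) = ∗0 := by
  obtain ⟨n, hn⟩ := hT
  rw [← Nat.card_eq_fintype_card] at hn hH
  have hcop : (Nat.card T).Coprime (Nat.card H) :=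
    hn ▸ (Nat.coprime_two_left.2 hH).pow_left n
  have h2 : 2 ∣ Nat.card (frattini T) :=
    (((IsPGroup.of_card hn).to_subgroup _).card_eq_or_dvd).resolve_left
      (Subgroup.card_eq_one.not.2 hfr)
  obtain ⟨⟨t, htΦ⟩, ht2⟩ := exists_prime_orderOf_dvd_card' 2 h2
  refine nimGEN_eq_zero_of_orderOf_eq_two_of_mem_frattini
    (mk_one_mem_frattini_prod_of_coprime hcop htΦ) ?_ hd.ge
  simpa [Prod.orderOf] using ht2
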